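/- arXiv:1603.03944 — 4 statements merged into one kernel-verified Lean document; each statement's English description precedes it below -/
import Mathlib

section
/- A multiindex α ∈ ℕ^s belongs to the union of all lower sets of cardinality at most N if and only if ∏_{j=1}^s (α_j + 1) ≤ N. -/
/-- A finite set of multiindices is a lower set if it is downward closed
under the componentwise order. -/
def IsLowerFinset {s : ℕ} (B : Finset (Fin s → ℕ)) : Prop :=
  ∀ a ∈ B, ∀ b : Fin s → ℕ, b ≤ a → b ∈ B

theorem stmt_1 (s N : ℕ) (α : Fin s → ℕ) :
    (∃ B : Finset (Fin s → ℕ), IsLowerFinset B ∧ B.card ≤ N ∧ α ∈ B) ↔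
      ∏ j, (α j + 1) ≤ N := by
  constructor
  · rintro ⟨B, hB, hcard, hα⟩
    have hsub : Finset.Iic α ⊆ B := fun b hb =>
      hB α hα b (Finset.mem_Iic.mp hb)
    calc ∏ j, (α j + 1) = (Finset.Iic α).card := by
          rw [Pi.card_Iic]; simp [Nat.card_Iic]
      _ ≤ B.card := Finset.card_le_card hsub
      _ ≤ N := hcard
  · intro h
    refine ⟨Finset.Iic α, ?_, ?_, Finset.mem_Iic.mpr le_rfl⟩
    · intro a ha b hb
      exact Finset.mem_Iic.mpr (hb.trans (Finset.mem_Iic.mp ha))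
    · rw [Pi.card_Iic]; simpa [Nat.card_Iic] using h
end

section
/- Let Ω ⊆ ℂ^s be finite with distinct points x_ω = e^ω and f_ω ≠ 0, and f(γ) = Σ_ω f_ω e^{ω·γ}. Let A, B ⊆ ℕ^s be finite with rank V(X_Ω,A) = #Ω. Then a coefficient vector p ∈ ℂ^B lies in the kernel of F_{A,B} = [f(α+β)]_{α∈A,β∈B} if and only if the polynomial p(x) = Σ_{β∈B} p_β x^β vanishes at every point of X_Ω. -/
open scoped BigOperators Matrix

theorem stmt_10 (s : ℕ) (ι : Type*) [Fintype ι] [DecidableEq ι]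
    (ω : ι → Fin s → ℂ) (c : ι → ℂ) (hc : ∀ i, c i ≠ 0)
    (hdist : Function.Injective (fun i => fun j => Complex.exp (ω i j)))
    (f : (Fin s → ℕ) → ℂ)
    (hf : ∀ γ : Fin s → ℕ, f γ = ∑ i, c i * Complex.exp (∑ j, ω i j * (γ j : ℂ)))
    (A B : Finset (Fin s → ℕ))
    (hA : (Matrix.of fun (i : ι) (a : A) => ∏ j, Complex.exp (ω i j) ^ (a.1 j)).rank
        = Fintype.card ι)
    (p : B → ℂ) :
    (Matrix.of fun (a : A) (b : B) => f (a.1 + b.1)).mulVec p = 0 ↔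
      ∀ i : ι, ∑ b : B, p b * ∏ j, Complex.exp (ω i j) ^ (b.1 j) = 0 := by
  classical
  set M : Matrix ι A ℂ := Matrix.of fun (i : ι) (a : A) => ∏ j, Complex.exp (ω i j) ^ (a.1 j)
    with hM
  set v : ι → ℂ := fun i => c i * ∑ b : B, p b * ∏ j, Complex.exp (ω i j) ^ (b.1 j) with hv
  have hexp : ∀ (i : ι) (γ : Fin s → ℕ),
      Complex.exp (∑ j, ω i j * (γ j : ℂ)) = ∏ j, Complex.exp (ω i j) ^ (γ j) := by
    intro i γ
    rw [Complex.exp_sum]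
    exact Finset.prod_congr rfl fun j _ => by rw [mul_comm, Complex.exp_nat_mul]
  have key : (Matrix.of fun (a : A) (b : B) => f (a.1 + b.1)).mulVec p = M.vecMul v := by
    funext a
    simp only [Matrix.mulVec, Matrix.vecMul, dotProduct, Matrix.of_apply, hv, hM]
    have : ∀ b : B, f (a.1 + b.1) * p b
        = ∑ i, (c i * ∏ j, Complex.exp (ω i j) ^ (b.1 j)) * p b
          * ∏ j, Complex.exp (ω i j) ^ (a.1 j) := by
      intro b
      rw [hf, Finset.sum_mul]
      refine Finset.sum_congr rfl fun i _ => ?_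
      rw [hexp]
      have : ∀ j, (a.1 + b.1) j = a.1 j + b.1 j := fun j => rfl
      simp only [this, pow_add, Finset.prod_mul_distrib]
      ring
    rw [Finset.sum_congr rfl fun b _ => this b, Finset.sum_comm]
    refine Finset.sum_congr rfl fun i _ => ?_
    rw [Finset.mul_sum, Finset.sum_mul]
    refine Finset.sum_congr rfl fun b _ => ?_
    ring
  have hLI : LinearIndependent ℂ (fun i => M i) := by
    rw [linearIndependent_iff_card_eq_finrank_span]
    rw [← hA, M.rank_eq_finrank_span_row]
    rfl
  have hinj : Function.Injective M.vecMul := Matrix.vecMul_injective_iff.mpr hLI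
  rw [key]
  constructor
  · intro h i
    have hv0 : v = 0 := by
      apply hinj
      show v ᵥ* M = (0 : ι → ℂ) ᵥ* M
      rw [h, Matrix.zero_vecMul]
    have := congr_fun hv0 i
    simp only [hv, Pi.zero_apply, mul_eq_zero] at this
    exact this.resolve_left (hc i)
  · intro h
    have hv0 : v = 0 := by
      funext i
      show c i * _ = 0
      rw [h i, mul_zero]
    rw [hv0, Matrix.zero_vecMul]
end

section
/- Let Ω ⊆ ℂ^s be finite with distinct x_ω and f_ω ≠ 0, and f(γ) = Σ_ω f_ω e^{ω·γ}. If A ⊆ ℕ^s is finite with rank V(X_Ω,A) < #Ω, then there exists a finite B ⊆ ℕ^s and p ∈ ℂ^B with F_{A,B} p = 0 but the polynomial Σ_β p_β x^β not vanishing identically on X_Ω. -/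
open scoped BigOperators Matrix

lemma interp_aux {σ : Type*} [Fintype σ] {ι : Type*} [Fintype ι] [DecidableEq ι]
    (x : ι → σ → ℂ) (hx : Function.Injective x) (v : ι → ℂ) :
    ∃ q : MvPolynomial σ ℂ, ∀ i, MvPolynomial.eval (x i) q = v i := by
  classical
  let fac : ι → ι → MvPolynomial σ ℂ := fun i k =>
    if h : x i = x k then 1 else
      let j := (Function.ne_iff.mp h).choose
      MvPolynomial.C (x i j - x k j)⁻¹ * (MvPolynomial.X j - MvPolynomial.C (x k j))
  have hfac_self : ∀ i k, x i ≠ x k → MvPolynomial.eval (x i) (fac i k) = 1 := by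
    intro i k h
    simp only [fac, dif_neg h]
    have hj := (Function.ne_iff.mp h).choose_spec
    simp [inv_mul_cancel₀ (sub_ne_zero.mpr hj)]
  have hfac_zero : ∀ i k, x i ≠ x k → MvPolynomial.eval (x k) (fac i k) = 0 := by
    intro i k h
    simp [fac, dif_neg h]
  let L : ι → MvPolynomial σ ℂ := fun i => ∏ k ∈ Finset.univ.erase i, fac i k
  have hL_self : ∀ i, MvPolynomial.eval (x i) (L i) = 1 := by
    intro i
    simp only [L, map_prod]
    apply Finset.prod_eq_one
    intro k hk
    exact hfac_self i k (fun h => (Finset.mem_erase.mp hk).1 (hx h).symm)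
  have hL_other : ∀ i m, m ≠ i → MvPolynomial.eval (x m) (L i) = 0 := by
    intro i m hm
    simp only [L, map_prod]
    apply Finset.prod_eq_zero (Finset.mem_erase.mpr ⟨hm, Finset.mem_univ m⟩)
    exact hfac_zero i m (fun h => hm (hx h).symm)
  refine ⟨∑ i, MvPolynomial.C (v i) * L i, fun m => ?_⟩
  rw [map_sum]
  rw [Finset.sum_eq_single m]
  · simp [hL_self m]
  · intro i _ hi
    simp [hL_other i m (by exact fun h => hi (h ▸ rfl))]
  · simp

lemma kern_aux {ι α : Type*} [Fintype ι] [Fintype α] [DecidableEq ι] [DecidableEq α]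
    (M : Matrix ι α ℂ) (h : M.rank < Fintype.card ι) :
    ∃ u : ι → ℂ, u ≠ 0 ∧ ∀ a, ∑ i, M i a * u i = 0 := by
  have hT : Mᵀ.rank < Fintype.card ι := by rwa [Matrix.rank_transpose]
  have hker : LinearMap.ker Mᵀ.mulVecLin ≠ ⊥ := by
    intro hk
    have h2 := LinearMap.finrank_range_add_finrank_ker Mᵀ.mulVecLin
    rw [hk, finrank_bot, add_zero] at h2
    rw [Matrix.rank] at hT
    simp [h2] at hT
  obtain ⟨u, hu, hu0⟩ := Submodule.ne_bot_iff _ |>.mp hker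
  refine ⟨u, hu0, fun a => ?_⟩
  have := LinearMap.mem_ker.mp hu
  have := congrFun this a
  simpa [Matrix.mulVec, Matrix.vecMul, dotProduct, Matrix.transpose_apply,
    mul_comm] using this

theorem stmt_11 (s : ℕ) (ι : Type*) [Fintype ι] [DecidableEq ι]
    (ω : ι → Fin s → ℂ) (c : ι → ℂ) (hc : ∀ i, c i ≠ 0)
    (hdist : Function.Injective (fun i => fun j => Complex.exp (ω i j)))
    (f : (Fin s → ℕ) → ℂ)
    (hf : ∀ γ : Fin s → ℕ, f γ = ∑ i, c i * Complex.exp (∑ j, ω i j * (γ j : ℂ)))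
    (A : Finset (Fin s → ℕ))
    (hA : (Matrix.of fun (i : ι) (a : A) => ∏ j, Complex.exp (ω i j) ^ (a.1 j)).rank
        < Fintype.card ι) :
    ∃ B : Finset (Fin s → ℕ), ∃ p : B → ℂ,
      (Matrix.of fun (a : A) (b : B) => f (a.1 + b.1)).mulVec p = 0 ∧
      ∃ i : ι, ∑ b : B, p b * ∏ j, Complex.exp (ω i j) ^ (b.1 j) ≠ 0 := by
  classical
  set x : ι → Fin s → ℂ := fun i j => Complex.exp (ω i j) with hxdef
  have hexp : ∀ (i : ι) (γ : Fin s → ℕ),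
      Complex.exp (∑ j, ω i j * (γ j : ℂ)) = ∏ j, x i j ^ γ j := by
    intro i γ
    rw [Complex.exp_sum]
    refine Finset.prod_congr rfl fun j _ => ?_
    rw [mul_comm, Complex.exp_nat_mul]
  -- nonzero kernel vector
  obtain ⟨u, hu0, hu⟩ := kern_aux _ hA
  -- interpolating polynomial
  obtain ⟨q, hq⟩ := interp_aux x hdist (fun i => u i / c i)
  refine ⟨q.support.image Finsupp.equivFunOnFinite,
    fun b => q.coeff (Finsupp.equivFunOnFinite.symm b.1), ?_, ?_⟩
  all_goals
    have heval : ∀ y : Fin s → ℂ,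
        ∑ b : (q.support.image ⇑Finsupp.equivFunOnFinite : Finset (Fin s → ℕ)),
          q.coeff (Finsupp.equivFunOnFinite.symm b.1) * ∏ j, y j ^ (b.1 j)
        = MvPolynomial.eval y q := by
      intro y
      rw [MvPolynomial.eval_eq, Finset.univ_eq_attach,
        Finset.sum_attach _ (fun b => q.coeff (Finsupp.equivFunOnFinite.symm b) *
          ∏ j, y j ^ (b j)),
        Finset.sum_image (fun a _ b _ h => Finsupp.equivFunOnFinite.injective h)]
      refine Finset.sum_congr rfl fun d _ => ?_
      rw [Equiv.symm_apply_apply]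
      congr 1
      refine (Finset.prod_subset (Finset.subset_univ d.support) ?_).symm
      intro j _ hj
      simp only [Finsupp.notMem_support_iff] at hj
      simp [Finsupp.equivFunOnFinite, hj]
  · funext a
    simp only [Matrix.mulVec, dotProduct, Matrix.of_apply, Pi.zero_apply]
    have expand : ∀ b : (Fin s → ℕ),
        f (a.1 + b) = ∑ i, (c i * ∏ j, x i j ^ (a.1 j)) * ∏ j, x i j ^ (b j) := by
      intro b
      rw [hf]
      refine Finset.sum_congr rfl fun i _ => ?_
      rw [hexp]
      simp only [Pi.add_apply, pow_add, Finset.prod_mul_distrib]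
      ring
    calc ∑ b : (q.support.image ⇑Finsupp.equivFunOnFinite : Finset (Fin s → ℕ)),
          f (a.1 + b.1) * q.coeff (Finsupp.equivFunOnFinite.symm b.1)
        = ∑ b : (q.support.image ⇑Finsupp.equivFunOnFinite : Finset (Fin s → ℕ)),
            ∑ i, (c i * ∏ j, x i j ^ (a.1 j)) *
              (q.coeff (Finsupp.equivFunOnFinite.symm b.1) * ∏ j, x i j ^ (b.1 j)) := by
          refine Finset.sum_congr rfl fun b _ => ?_
          rw [expand, Finset.sum_mul]
          refine Finset.sum_congr rfl fun i _ => ?_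
          ring
      _ = ∑ i, (c i * ∏ j, x i j ^ (a.1 j)) *
            (∑ b : (q.support.image ⇑Finsupp.equivFunOnFinite : Finset (Fin s → ℕ)),
              q.coeff (Finsupp.equivFunOnFinite.symm b.1) * ∏ j, x i j ^ (b.1 j)) := by
          rw [Finset.sum_comm]
          exact Finset.sum_congr rfl fun i _ => (Finset.mul_sum _ _ _).symm
      _ = ∑ i, (c i * ∏ j, x i j ^ (a.1 j)) * (u i / c i) := by
          refine Finset.sum_congr rfl fun i _ => ?_
          rw [heval, hq]
      _ = ∑ i, (∏ j, x i j ^ (a.1 j)) * u i := by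
          refine Finset.sum_congr rfl fun i _ => ?_
          field_simp [hc i]
      _ = 0 := by rw [← hu a]; rfl
  · obtain ⟨i, hi⟩ := Function.ne_iff.mp hu0
    refine ⟨i, ?_⟩
    have : ∑ b : (q.support.image ⇑Finsupp.equivFunOnFinite : Finset (Fin s → ℕ)),
        q.coeff (Finsupp.equivFunOnFinite.symm b.1) * ∏ j, x i j ^ (b.1 j)
        = u i / c i := by rw [heval, hq]
    rw [this]
    exact div_ne_zero hi (hc i)
end

section
/- Let X ⊆ ℂ^s be finite and suppose A ⊆ ℕ^s is finite such that Π_A is a degree reducing interpolation space for X, with interpolation operator L_A. Then for every α ∉ A, the polynomial q_α := x^α − L_A(x^α) vanishes on X and has degree exactly |α|; moreover every polynomial p vanishing on X can be written p = Σ_{α∉A, p_α ≠ 0} p_α q_α where p = Σ_α p_α x^α, i.e., p = p − L_A p. -/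
open MvPolynomial

/-- Properties of a degree reducing interpolation: `Π_A` (polynomials supported on
`A`) is a degree reducing interpolation space for `X` with interpolation operator
`L`. For every `α ∉ A` the polynomial `q_α = x^α - L(x^α)` vanishes on `X` and has
total degree exactly `|α|`; and every polynomial `p` vanishing on `X` satisfies
`p = Σ_{α ∉ A} p_α q_α = p - L p`. -/
theorem stmt_19 (s : ℕ) (X : Finset (Fin s → ℂ)) (A : Finset (Fin s →₀ ℕ))
    (L : MvPolynomial (Fin s) ℂ → MvPolynomial (Fin s) ℂ)
    -- `L q` is supported on `A`, interpolates `q` on `X`, and is degree reducing: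
    (hsupp : ∀ q, (L q).support ⊆ A)
    (hinterp : ∀ q, ∀ x ∈ X, eval x (L q) = eval x q)
    (hdeg : ∀ q, (L q).totalDegree ≤ q.totalDegree)
    -- uniqueness of the degree reducing interpolant from `Π_A`:
    (huniq : ∀ q p : MvPolynomial (Fin s) ℂ, p.support ⊆ A →
      (∀ x ∈ X, eval x p = eval x q) → p.totalDegree ≤ q.totalDegree → p = L q) :
    (∀ α : Fin s →₀ ℕ, α ∉ A →
        (∀ x ∈ X, eval x (monomial α (1 : ℂ) - L (monomial α 1)) = 0) ∧
        (monomial α (1 : ℂ) - L (monomial α 1)).totalDegree = α.sum fun _ e => e) ∧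
      ∀ p : MvPolynomial (Fin s) ℂ, (∀ x ∈ X, eval x p = 0) →
        p = ∑ α ∈ p.support \ A,
              C (p.coeff α) * (monomial α (1 : ℂ) - L (monomial α 1)) ∧
        p = p - L p := by
  -- degree bound on q_α
  have hqdeg : ∀ α : Fin s →₀ ℕ,
      (monomial α (1 : ℂ) - L (monomial α 1)).totalDegree ≤ α.sum fun _ e => e := by
    intro α
    have h1 : (monomial α (1 : ℂ)).totalDegree = α.sum fun _ e => e :=
      totalDegree_monomial α (one_ne_zero)
    calc (monomial α (1 : ℂ) - L (monomial α 1)).totalDegree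
        ≤ max (monomial α (1 : ℂ)).totalDegree (L (monomial α 1)).totalDegree := by
          rw [sub_eq_add_neg]
          refine le_trans (totalDegree_add _ _) ?_
          rw [totalDegree_neg]
      _ ≤ α.sum fun _ e => e := by
          rw [h1]
          exact max_le le_rfl (le_of_le_of_eq (hdeg _) h1)
  have hqdeg_eq : ∀ α : Fin s →₀ ℕ, α ∉ A →
      (monomial α (1 : ℂ) - L (monomial α 1)).totalDegree = α.sum fun _ e => e := by
    intro α hα
    refine le_antisymm (hqdeg α) ?_
    apply le_totalDegree (s := α)
    have hc : coeff α (L (monomial α 1)) = 0 := by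
      rw [← notMem_support_iff]
      exact fun h => hα (hsupp _ h)
    simp [coeff_sub, hc, coeff_monomial]
  constructor
  · intro α hα
    refine ⟨?_, hqdeg_eq α hα⟩
    intro x hx
    simp [eval_sub, hinterp (monomial α 1) x hx]
  · intro p hp
    -- L p = 0
    have hLp : (0 : MvPolynomial (Fin s) ℂ) = L p := by
      refine huniq p 0 (by simp) ?_ (by simp)
      intro x hx; simp [hp x hx]
    set S : MvPolynomial (Fin s) ℂ :=
      ∑ α ∈ p.support \ A, C (p.coeff α) * (monomial α (1 : ℂ) - L (monomial α 1)) with hS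
    have key : p - S = L p := by
      refine huniq p (p - S) ?_ ?_ ?_
      · -- support ⊆ A
        intro β hβ
        rw [mem_support_iff] at hβ
        by_contra hβA
        apply hβ
        have hcS : coeff β S = coeff β p := by
          rw [hS, ]
          rw [coeff_sum]
          have : ∀ α ∈ p.support \ A,
              coeff β (C (p.coeff α) * (monomial α (1 : ℂ) - L (monomial α 1)))
                = if α = β then p.coeff α else 0 := by
            intro α hα
            have hc : coeff β (L (monomial α 1)) = 0 := by
              rw [← notMem_support_iff]
              exact fun h => hβA (hsupp _ h)
            rw [coeff_C_mul, coeff_sub, hc, coeff_monomial]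
            by_cases h : α = β <;> simp [h]
          rw [Finset.sum_congr rfl this]
          rw [Finset.sum_ite_eq' (p.support \ A) β]
          by_cases hmem : β ∈ p.support \ A
          · simp [hmem]
          · simp only [hmem, if_neg hmem]
            simp only [Finset.mem_sdiff, mem_support_iff] at hmem
            push_neg at hmem
            by_cases hβs : p.coeff β = 0
            · simp [if_neg, hmem, hβs]
            · exact absurd (hmem hβs) hβA
        simp [coeff_sub, hcS]
      · intro x hx
        have hSe : eval x S = 0 := by
          rw [hS]
          rw [eval_sum]
          refine Finset.sum_eq_zero fun α hα => ?_
          simp [eval_sub, hinterp (monomial α 1) x hx]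
        simp [eval_sub, hSe]
      · -- degree
        have hSdeg : S.totalDegree ≤ p.totalDegree := by
          rw [hS]
          refine le_trans (totalDegree_finset_sum _ _) ?_
          refine Finset.sup_le fun α hα => ?_
          refine le_trans (totalDegree_mul _ _) ?_
          rw [totalDegree_C, zero_add]
          refine le_trans (hqdeg α) ?_
          rw [Finset.mem_sdiff] at hα
          exact le_totalDegree hα.1
        calc (p - S).totalDegree ≤ max p.totalDegree S.totalDegree := by
              rw [sub_eq_add_neg]
              refine le_trans (totalDegree_add _ _) ?_
              rw [totalDegree_neg]
          _ ≤ p.totalDegree := max_le le_rfl hSdeg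
    rw [← hLp] at key
    constructor
    · exact sub_eq_zero.mp key
    · rw [← hLp, sub_zero]
end
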